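/- For any fixed symmetric matrix B ∈ 𝕊ₙ, the function X ↦ Tr₊(X^{1/2} B X^{1/2}) is concave on the cone of symmetric positive semidefinite matrices: for all positive semidefinite X₁, X₂ ∈ 𝕊ₙ and θ ∈ [0,1], Tr₊((θX₁+(1−θ)X₂)^{1/2} B (θX₁+(1−θ)X₂)^{1/2}) ≥ θ·Tr₊(X₁^{1/2} B X₁^{1/2}) + (1−θ)·Tr₊(X₂^{1/2} B X₂^{1/2}). -/

import Mathlib

open Matrix

/-- The largest eigenvalue of a matrix, as the supremum of its (real) eigenvalues. -/
noncomputable def lambdaMax {n : ℕ} (M : Matrix (Fin n) (Fin n) ℝ) : ℝ :=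
  sSup {t : ℝ | ∃ v : Fin n → ℝ, v ≠ 0 ∧ M.mulVec v = t • v}

open Classical in
/-- `card z` is the number of nonzero coefficients of the vector `z`. -/
noncomputable def card {n : ℕ} (z : Fin n → ℝ) : ℕ :=
  (Finset.univ.filter fun i => z i ≠ 0).card

open Classical in
/-- `trPlus M` is the sum of the positive parts of the eigenvalues of a symmetric matrix `M`. -/
noncomputable def trPlus {n : ℕ} (M : Matrix (Fin n) (Fin n) ℝ) : ℝ :=
  if h : M.IsHermitian then ∑ i, max (h.eigenvalues i) 0 else 0

open Classical in
/-- `matSqrt X` is the positive semidefinite square root of a positive semidefinite matrix. -/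
noncomputable def matSqrt {n : ℕ} (X : Matrix (Fin n) (Fin n) ℝ) : Matrix (Fin n) (Fin n) ℝ :=
  if h : X.PosSemidef then
    h.1.eigenvectorUnitary.1 * diagonal ((↑) ∘ (√·) ∘ h.1.eigenvalues) *
      (star h.1.eigenvectorUnitary : Matrix (Fin n) (Fin n) ℝ)
  else 0

/-- The positive semidefinite square root (replacement for the removed Mathlib definition). -/
noncomputable def Matrix.PosSemidef.sqrt {n : ℕ} {X : Matrix (Fin n) (Fin n) ℝ}
    (h : X.PosSemidef) : Matrix (Fin n) (Fin n) ℝ :=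
  h.1.eigenvectorUnitary.1 * diagonal ((↑) ∘ (√·) ∘ h.1.eigenvalues) *
    (star h.1.eigenvectorUnitary : Matrix (Fin n) (Fin n) ℝ)

lemma Matrix.PosSemidef.posSemidef_sqrt {n : ℕ} {X : Matrix (Fin n) (Fin n) ℝ}
    (h : X.PosSemidef) : h.sqrt.PosSemidef := by
  unfold Matrix.PosSemidef.sqrt
  apply Matrix.PosSemidef.mul_mul_conjTranspose_same
  refine Matrix.posSemidef_diagonal_iff.mpr fun i => ?_
  exact Real.sqrt_nonneg _

lemma Matrix.PosSemidef.sqrt_mul_self {n : ℕ} {X : Matrix (Fin n) (Fin n) ℝ}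
    (h : X.PosSemidef) : h.sqrt * h.sqrt = X := by
  unfold Matrix.PosSemidef.sqrt
  set U : Matrix (Fin n) (Fin n) ℝ := h.1.eigenvectorUnitary.1 with hU
  have hUU : (star h.1.eigenvectorUnitary : Matrix (Fin n) (Fin n) ℝ) * U = 1 :=
    h.1.eigenvectorUnitary.2.1
  have hsp := h.1.spectral_theorem
  rw [Unitary.conjStarAlgAut_apply] at hsp
  conv_rhs => rw [hsp]
  have e : U * diagonal ((↑) ∘ (√·) ∘ h.1.eigenvalues) *
      (star h.1.eigenvectorUnitary : Matrix (Fin n) (Fin n) ℝ) *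
      (U * diagonal ((↑) ∘ (√·) ∘ h.1.eigenvalues) *
      (star h.1.eigenvectorUnitary : Matrix (Fin n) (Fin n) ℝ)) =
      U * (diagonal ((↑) ∘ (√·) ∘ h.1.eigenvalues) *
      ((star h.1.eigenvectorUnitary : Matrix (Fin n) (Fin n) ℝ) * U) *
      diagonal ((↑) ∘ (√·) ∘ h.1.eigenvalues)) *
      (star h.1.eigenvectorUnitary : Matrix (Fin n) (Fin n) ℝ) := by
    simp only [Matrix.mul_assoc]
  rw [e, hUU, Matrix.mul_one, Matrix.diagonal_mul_diagonal]
  congr 3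
  funext i
  simp only [Function.comp_apply, RCLike.ofReal_real_eq_id, id]
  exact Real.mul_self_sqrt (h.eigenvalues_nonneg i)

variable {n : ℕ}

lemma diag_nonneg' {A : Matrix (Fin n) (Fin n) ℝ} (hA : A.PosSemidef) (i : Fin n) : 0 ≤ A i i := by
  exact hA.diag_nonneg

lemma trPlus_eq {M : Matrix (Fin n) (Fin n) ℝ} (hM : M.IsHermitian) :
    trPlus M = ∑ i, max (hM.eigenvalues i) 0 := by
  rw [trPlus, dif_pos hM]

lemma trace_diag_mul (d : Fin n → ℝ) (Q : Matrix (Fin n) (Fin n) ℝ) :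
    (diagonal d * Q).trace = ∑ i, d i * Q i i := by
  simp [Matrix.trace, Matrix.diag, Matrix.mul_apply, diagonal]

/-- Bound: for Hermitian M and 0 ⪯ P ⪯ 1, Tr(M P) ≤ trPlus M. -/
lemma trace_mul_le_trPlus {M P : Matrix (Fin n) (Fin n) ℝ} (hM : M.IsHermitian)
    (hP : P.PosSemidef) (hP1 : (1 - P).PosSemidef) : (M * P).trace ≤ trPlus M := by
  classical
  set U : Matrix (Fin n) (Fin n) ℝ := (hM.eigenvectorUnitary : Matrix (Fin n) (Fin n) ℝ) with hU
  have hUU : Uᴴ * U = 1 := hM.eigenvectorUnitary.2.1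
  have hspec : M = U * diagonal hM.eigenvalues * Uᴴ := by
    have := hM.spectral_theorem
    rw [Unitary.conjStarAlgAut_apply] at this
    exact this
  set Q : Matrix (Fin n) (Fin n) ℝ := Uᴴ * P * U with hQ
  have hQpsd : Q.PosSemidef := hP.conjTranspose_mul_mul_same U
  have hQ1 : (1 - Q).PosSemidef := by
    have h1 : (1 : Matrix (Fin n) (Fin n) ℝ) - Q = Uᴴ * (1 - P) * U := by
      rw [Matrix.mul_sub, Matrix.sub_mul, Matrix.mul_one, hUU, hQ]
    rw [h1]
    exact hP1.conjTranspose_mul_mul_same U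
  have htr : (M * P).trace = (diagonal hM.eigenvalues * Q).trace := by
    have e1 : diagonal hM.eigenvalues * Q = (diagonal hM.eigenvalues * Uᴴ * P) * U := by
      simp only [hQ, Matrix.mul_assoc]
    rw [e1, Matrix.trace_mul_comm (diagonal hM.eigenvalues * Uᴴ * P) U, show U * (diagonal hM.eigenvalues * Uᴴ * P)
        = (U * diagonal hM.eigenvalues * Uᴴ) * P from by simp only [Matrix.mul_assoc],
      ← hspec]
  rw [htr, trace_diag_mul, trPlus_eq hM]
  apply Finset.sum_le_sum
  intro i _
  have h0 : 0 ≤ Q i i := diag_nonneg' hQpsd i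
  have h1 : Q i i ≤ 1 := by
    have := diag_nonneg' hQ1 i
    simp only [Matrix.sub_apply, Matrix.one_apply_eq] at this
    linarith
  rcases le_or_gt 0 (hM.eigenvalues i) with h | h
  · calc hM.eigenvalues i * Q i i ≤ hM.eigenvalues i * 1 := by nlinarith
      _ = hM.eigenvalues i := mul_one _
      _ ≤ max (hM.eigenvalues i) 0 := le_max_left _ _
  · calc hM.eigenvalues i * Q i i ≤ 0 := by nlinarith
      _ ≤ max (hM.eigenvalues i) 0 := le_max_right _ _

/-- Achievability: there is 0 ⪯ P ⪯ 1 with Tr(M P) = trPlus M. -/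
lemma exists_proj_trPlus {M : Matrix (Fin n) (Fin n) ℝ} (hM : M.IsHermitian) :
    ∃ P : Matrix (Fin n) (Fin n) ℝ, P.PosSemidef ∧ (1 - P).PosSemidef ∧
      (M * P).trace = trPlus M := by
  classical
  set U : Matrix (Fin n) (Fin n) ℝ := (hM.eigenvectorUnitary : Matrix (Fin n) (Fin n) ℝ) with hU
  have hUU : Uᴴ * U = 1 := hM.eigenvectorUnitary.2.1
  have hUU' : U * Uᴴ = 1 := hM.eigenvectorUnitary.2.2
  have hspec : M = U * diagonal hM.eigenvalues * Uᴴ := by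
    have := hM.spectral_theorem
    rw [Unitary.conjStarAlgAut_apply] at this
    exact this
  set c : Fin n → ℝ := fun i => if 0 < hM.eigenvalues i then 1 else 0 with hc
  refine ⟨U * diagonal c * Uᴴ, ?_, ?_, ?_⟩
  · apply Matrix.PosSemidef.mul_mul_conjTranspose_same
    refine Matrix.posSemidef_diagonal_iff.mpr fun i => ?_
    by_cases h : 0 < hM.eigenvalues i <;> simp [hc, h]
  · have h1 : (1 : Matrix (Fin n) (Fin n) ℝ) - U * diagonal c * Uᴴ
        = U * diagonal (fun i => 1 - c i) * Uᴴ := by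
      have : (diagonal (fun i => 1 - c i) : Matrix (Fin n) (Fin n) ℝ)
          = 1 - diagonal c := by
        rw [← Matrix.diagonal_one, ← Matrix.diagonal_sub]
      rw [this, Matrix.mul_sub, Matrix.sub_mul, Matrix.mul_one, hUU']
    rw [h1]
    apply Matrix.PosSemidef.mul_mul_conjTranspose_same
    refine Matrix.posSemidef_diagonal_iff.mpr fun i => ?_
    by_cases h : 0 < hM.eigenvalues i <;> simp [hc, h]
  · have key : (U * diagonal hM.eigenvalues * Uᴴ) * (U * diagonal c * Uᴴ)
        = U * (diagonal hM.eigenvalues * diagonal c) * Uᴴ := by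
      simp only [Matrix.mul_assoc]
      rw [show Uᴴ * (U * (diagonal c * Uᴴ)) = (Uᴴ * U) * (diagonal c * Uᴴ) from by
        simp only [Matrix.mul_assoc], hUU, Matrix.one_mul]
    have e1 : M * (U * diagonal c * Uᴴ)
        = U * (diagonal hM.eigenvalues * diagonal c) * Uᴴ :=
      (congrArg (fun Z => Z * (U * diagonal c * Uᴴ)) hspec).trans key
    rw [e1, Matrix.trace_mul_cycle, show Uᴴ * U * (diagonal hM.eigenvalues * diagonal c)
        = diagonal hM.eigenvalues * diagonal c from by rw [hUU, Matrix.one_mul],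
      Matrix.diagonal_mul_diagonal, Matrix.trace_diagonal, trPlus_eq hM]
    apply Finset.sum_congr rfl
    intro i _
    by_cases h : 0 < hM.eigenvalues i
    · simp [hc, h, le_of_lt h, max_eq_left (le_of_lt h)]
    · push_neg at h
      simp [hc, not_lt.mpr h, max_eq_right h]

lemma trace_nonneg' {A : Matrix (Fin n) (Fin n) ℝ} (hA : A.PosSemidef) : 0 ≤ A.trace := by
  rw [Matrix.trace]
  exact Finset.sum_nonneg fun i _ => diag_nonneg' hA i

/-- Key bound: if 0 ⪯ Y ⪯ X then Tr(B Y) ≤ trPlus (√X B √X). -/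
lemma trace_le_trPlus_sqrt {B X Y : Matrix (Fin n) (Fin n) ℝ} (hB : B.IsHermitian)
    (hX : X.PosSemidef) (hY : Y.PosSemidef) (hXY : (X - Y).PosSemidef) :
    (B * Y).trace ≤ trPlus (hX.sqrt * B * hX.sqrt) := by
  classical
  set U : Matrix (Fin n) (Fin n) ℝ := (hX.1.eigenvectorUnitary : Matrix (Fin n) (Fin n) ℝ) with hU
  have hUU : Uᴴ * U = 1 := hX.1.eigenvectorUnitary.2.1
  have hUU' : U * Uᴴ = 1 := hX.1.eigenvectorUnitary.2.2
  set d : Fin n → ℝ := hX.1.eigenvalues with hdd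
  have hd : ∀ i, 0 ≤ d i := hX.eigenvalues_nonneg
  have conjmul : ∀ a b : Fin n → ℝ, (U * diagonal a * Uᴴ) * (U * diagonal b * Uᴴ)
      = U * diagonal (fun i => a i * b i) * Uᴴ := by
    intro a b
    have h : (U * diagonal a * Uᴴ) * (U * diagonal b * Uᴴ)
        = U * (diagonal a * (Uᴴ * U) * diagonal b) * Uᴴ := by
      simp only [Matrix.mul_assoc]
    rw [h, hUU, Matrix.mul_one, Matrix.diagonal_mul_diagonal]
  have conjH : ∀ a : Fin n → ℝ, (U * diagonal a * Uᴴ)ᴴ = U * diagonal a * Uᴴ := by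
    intro a
    simp only [Matrix.conjTranspose_mul, Matrix.conjTranspose_conjTranspose,
      Matrix.diagonal_conjTranspose]
    simp [Matrix.mul_assoc, star]
  have conjPSD : ∀ a : Fin n → ℝ, (∀ i, 0 ≤ a i) → (U * diagonal a * Uᴴ).PosSemidef :=
    fun a ha => (Matrix.posSemidef_diagonal_iff.mpr ha).mul_mul_conjTranspose_same U
  set S : Matrix (Fin n) (Fin n) ℝ := hX.sqrt with hSdef
  have hSH : S.IsHermitian := hX.posSemidef_sqrt.1
  have hS : S = U * diagonal (fun i => Real.sqrt (d i)) * Uᴴ := by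
    rw [hSdef, Matrix.PosSemidef.sqrt]
    rfl
  have hXdec : X = U * diagonal d * Uᴴ := by
    have := hX.1.spectral_theorem
    rw [Unitary.conjStarAlgAut_apply] at this
    exact this
  set g : Fin n → ℝ := fun i => if d i = 0 then 0 else (Real.sqrt (d i))⁻¹ with hg
  set e : Fin n → ℝ := fun i => if d i = 0 then 0 else 1 with he
  set T : Matrix (Fin n) (Fin n) ℝ := U * diagonal g * Uᴴ with hT
  set Pr : Matrix (Fin n) (Fin n) ℝ := U * diagonal e * Uᴴ with hPr
  have hTH : Tᴴ = T := conjH _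
  have sqrt_ne : ∀ i, d i ≠ 0 → Real.sqrt (d i) ≠ 0 := fun i hne =>
    Real.sqrt_ne_zero'.mpr (lt_of_le_of_ne (hd i) (Ne.symm hne))
  have hST : S * T = Pr := by
    have hfun : (fun i => Real.sqrt (d i) * g i) = e := by
      funext i
      by_cases hi : d i = 0
      · simp [hg, he, hi]
      · simp [hg, he, hi, mul_inv_cancel₀ (sqrt_ne i hi)]
    calc S * T = U * diagonal (fun i => Real.sqrt (d i) * g i) * Uᴴ := by
          rw [hS, hT]; exact conjmul _ _
      _ = Pr := by rw [hfun, hPr]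
  have hTS : T * S = Pr := by
    have hfun : (fun i => g i * Real.sqrt (d i)) = e := by
      funext i
      by_cases hi : d i = 0
      · simp [hg, he, hi]
      · simp [hg, he, hi, inv_mul_cancel₀ (sqrt_ne i hi)]
    calc T * S = U * diagonal (fun i => g i * Real.sqrt (d i)) * Uᴴ := by
          rw [hS, hT]; exact conjmul _ _
      _ = Pr := by rw [hfun, hPr]
  have hTXT : T * X * T = Pr := by
    have e1 : T * X * T = T * (U * diagonal d * Uᴴ) * T :=
      congrArg (fun Z => T * Z * T) hXdec
    have hfun : (fun i => (g i * d i) * g i) = e := by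
      funext i
      by_cases hi : d i = 0
      · simp [hg, he, hi]
      · have h2 : Real.sqrt (d i) * Real.sqrt (d i) = d i := Real.mul_self_sqrt (hd i)
        simp only [hg, he, if_neg hi]
        rw [← h2]
        field_simp
        rw [Real.sqrt_sq (Real.sqrt_nonneg _)]
        exact div_self (pow_ne_zero 2 (sqrt_ne i hi))
    calc T * X * T = (U * diagonal (fun i => g i * d i) * Uᴴ) * T := by
          rw [e1, hT, conjmul]
      _ = U * diagonal (fun i => (g i * d i) * g i) * Uᴴ := by rw [hT]; exact conjmul _ _
      _ = Pr := by rw [hfun, hPr]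
  set W : Matrix (Fin n) (Fin n) ℝ := U * diagonal (fun i => 1 - e i) * Uᴴ with hW
  have hWeq : W = 1 - Pr := by
    have h : (diagonal (fun i => 1 - e i) : Matrix (Fin n) (Fin n) ℝ) = 1 - diagonal e := by
      rw [← Matrix.diagonal_one, ← Matrix.diagonal_sub]
    rw [hW, h, Matrix.mul_sub, Matrix.sub_mul, Matrix.mul_one, hUU', hPr]
  have hWH : Wᴴ = W := conjH _
  have hWpsd : W.PosSemidef := conjPSD _ fun i => by by_cases hi : d i = 0 <;> simp [he, hi]
  have hWXW : W * X * W = 0 := by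
    have e1 : W * X * W = W * (U * diagonal d * Uᴴ) * W :=
      congrArg (fun Z => W * Z * W) hXdec
    have hfun : (fun i => ((1 - e i) * d i) * (1 - e i)) = fun _ => (0:ℝ) := by
      funext i
      by_cases hi : d i = 0 <;> simp [he, hi]
    calc W * X * W = (U * diagonal (fun i => (1 - e i) * d i) * Uᴴ) * W := by
          rw [e1, hW, conjmul]
      _ = U * diagonal (fun i => ((1 - e i) * d i) * (1 - e i)) * Uᴴ := by
          rw [hW]; exact conjmul _ _
      _ = 0 := by rw [hfun]; simp
  have hWYW : W * Y * W = 0 := by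
    have hWYWpsd : (W * Y * W).PosSemidef := by
      have h := hY.mul_mul_conjTranspose_same W
      rwa [hWH] at h
    have hWXYWpsd : (W * (X - Y) * W).PosSemidef := by
      have h := hXY.mul_mul_conjTranspose_same W
      rwa [hWH] at h
    have hsum : W * Y * W + W * (X - Y) * W = 0 := by
      rw [Matrix.mul_sub, Matrix.sub_mul, ← hWXW]
      abel
    have ht1 : (W * Y * W).trace = 0 := by
      have h1 := trace_nonneg' hWYWpsd
      have h2 := trace_nonneg' hWXYWpsd
      have h3 : (W * Y * W).trace + (W * (X - Y) * W).trace = 0 := by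
        rw [← Matrix.trace_add, hsum, Matrix.trace_zero]
      linarith
    set R : Matrix (Fin n) (Fin n) ℝ := hY.sqrt with hR
    have hRH : R.IsHermitian := hY.posSemidef_sqrt.1
    have hRR : R * R = Y := hY.sqrt_mul_self
    have hZ : (R * W)ᴴ * (R * W) = W * Y * W := by
      rw [Matrix.conjTranspose_mul, hWH, hRH.eq, ← hRR]
      simp only [Matrix.mul_assoc]
    have hZ0 : R * W = 0 := by
      have htr : ∑ i, ∑ j, ((R * W) j i)^2 = 0 := by
        have : ((R * W)ᴴ * (R * W)).trace = ∑ i, ∑ j, ((R * W) j i)^2 := by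
          simp [Matrix.trace, Matrix.diag, Matrix.mul_apply, Matrix.conjTranspose_apply, sq,
            mul_comm]
        rw [← this, hZ, ht1]
      ext j i
      have h1 : ∀ i ∈ Finset.univ, (0:ℝ) ≤ ∑ j, ((R * W) j i)^2 :=
        fun i _ => Finset.sum_nonneg fun j _ => sq_nonneg _
      have h2 := (Finset.sum_eq_zero_iff_of_nonneg h1).mp htr i (Finset.mem_univ i)
      have h3 : ∀ j ∈ Finset.univ, (0:ℝ) ≤ ((R * W) j i)^2 := fun j _ => sq_nonneg _
      have h4 := (Finset.sum_eq_zero_iff_of_nonneg h3).mp h2 j (Finset.mem_univ j)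
      simpa using pow_eq_zero_iff (n := 2) (by norm_num) |>.mp h4
    calc W * Y * W = W * (R * R) * W := by rw [hRR]
      _ = (W * R) * (R * W) := by simp only [Matrix.mul_assoc]
      _ = (W * R) * 0 := by rw [hZ0]
      _ = 0 := Matrix.mul_zero _
  have hYW : Y * W = 0 := by
    set R : Matrix (Fin n) (Fin n) ℝ := hY.sqrt with hR
    have hRH : R.IsHermitian := hY.posSemidef_sqrt.1
    have hRR : R * R = Y := hY.sqrt_mul_self
    have hZ : (R * W)ᴴ * (R * W) = W * Y * W := by
      rw [Matrix.conjTranspose_mul, hWH, hRH.eq, ← hRR]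
      simp only [Matrix.mul_assoc]
    have hZ0 : R * W = 0 := by
      have h0 : (R * W)ᴴ * (R * W) = 0 := by rw [hZ, hWYW]
      exact Matrix.conjTranspose_mul_self_eq_zero.mp h0
    calc Y * W = R * (R * W) := by rw [← hRR]; simp only [Matrix.mul_assoc]
      _ = 0 := by rw [hZ0, Matrix.mul_zero]
  have hWY : W * Y = 0 := by
    have : (Y * W)ᴴ = Wᴴ * Yᴴ := Matrix.conjTranspose_mul _ _
    calc W * Y = Wᴴ * Yᴴ := by rw [hWH, hY.1.eq]
      _ = (Y * W)ᴴ := (Matrix.conjTranspose_mul _ _).symm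
      _ = 0 := by rw [hYW]; simp
  have hPrYPr : Pr * Y * Pr = Y := by
    have h1 : Pr = 1 - W := by rw [hWeq]; abel
    rw [h1]
    have : (1 - W) * Y * (1 - W) = Y - W * Y - (Y * W - W * (Y * W)) := by
      simp only [Matrix.sub_mul, Matrix.mul_sub, Matrix.one_mul, Matrix.mul_one,
        Matrix.mul_assoc]
    rw [this, hWY, hYW]
    simp
  set P : Matrix (Fin n) (Fin n) ℝ := T * Y * T with hP
  have hPpsd : P.PosSemidef := by
    have h := hY.mul_mul_conjTranspose_same T
    rwa [hTH] at h
  have hP1 : ((1 : Matrix (Fin n) (Fin n) ℝ) - P).PosSemidef := by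
    have hPrP : Pr - P = T * (X - Y) * T := by
      rw [Matrix.mul_sub, Matrix.sub_mul, hTXT, hP]
    have hPrPpsd : (Pr - P).PosSemidef := by
      rw [hPrP]
      have h := hXY.mul_mul_conjTranspose_same T
      rwa [hTH] at h
    have hdecomp : (1 : Matrix (Fin n) (Fin n) ℝ) - P = W + (Pr - P) := by
      rw [hWeq]; abel
    rw [hdecomp]
    exact hWpsd.add hPrPpsd
  have hSPS : S * P * S = Y := by
    calc S * P * S = (S * T) * Y * (T * S) := by rw [hP]; simp only [Matrix.mul_assoc]
      _ = Pr * Y * Pr := by rw [hST, hTS]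
      _ = Y := hPrYPr
  have htr2 : (B * Y).trace = ((S * B * S) * P).trace := by
    have e1 : B * Y = B * (S * P * S) := by rw [hSPS]
    rw [e1, show B * (S * P * S) = (B * S * P) * S from by simp only [Matrix.mul_assoc],
      Matrix.trace_mul_comm (B * S * P) S]
    simp only [Matrix.mul_assoc]
  have hMH : (S * B * S).IsHermitian := by
    have : (S * B * S)ᴴ = S * B * S := by
      simp only [Matrix.conjTranspose_mul, hSH.eq, hB.eq, Matrix.mul_assoc]
    exact this
  rw [htr2]
  exact trace_mul_le_trPlus hMH hPpsd hP1

lemma psd_smul {A : Matrix (Fin n) (Fin n) ℝ} (hA : A.PosSemidef) {c : ℝ} (hc : 0 ≤ c) :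
    (c • A).PosSemidef := by
  exact hA.smul hc


/-- for fixed symmetric `B`, `X ↦ Tr₊(X^{1/2} B X^{1/2})` is concave on the
cone of positive semidefinite matrices. -/
theorem trPlus_sqrt_conj_concave {n : ℕ} (B : Matrix (Fin n) (Fin n) ℝ) (hB : B.IsHermitian)
    (X₁ X₂ : Matrix (Fin n) (Fin n) ℝ) (h1 : X₁.PosSemidef) (h2 : X₂.PosSemidef)
    (θ : ℝ) (hθ0 : 0 ≤ θ) (hθ1 : θ ≤ 1) :
    θ * trPlus (matSqrt X₁ * B * matSqrt X₁) +
        (1 - θ) * trPlus (matSqrt X₂ * B * matSqrt X₂) ≤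
      trPlus (matSqrt (θ • X₁ + (1 - θ) • X₂) * B * matSqrt (θ • X₁ + (1 - θ) • X₂)) := by
  classical
  have hθ' : 0 ≤ 1 - θ := by linarith
  have hXθ : (θ • X₁ + (1 - θ) • X₂).PosSemidef := (psd_smul h1 hθ0).add (psd_smul h2 hθ')
  have hm1 : matSqrt X₁ = h1.sqrt := dif_pos h1
  have hm2 : matSqrt X₂ = h2.sqrt := dif_pos h2
  have hmθ : matSqrt (θ • X₁ + (1 - θ) • X₂) = hXθ.sqrt := dif_pos hXθ
  set S₁ := h1.sqrt with hS1
  set S₂ := h2.sqrt with hS2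
  have hS1H : S₁.IsHermitian := h1.posSemidef_sqrt.1
  have hS2H : S₂.IsHermitian := h2.posSemidef_sqrt.1
  have hM1H : (S₁ * B * S₁).IsHermitian := by
    show (S₁ * B * S₁)ᴴ = S₁ * B * S₁
    simp only [Matrix.conjTranspose_mul, hS1H.eq, hB.eq, Matrix.mul_assoc]
  have hM2H : (S₂ * B * S₂).IsHermitian := by
    show (S₂ * B * S₂)ᴴ = S₂ * B * S₂
    simp only [Matrix.conjTranspose_mul, hS2H.eq, hB.eq, Matrix.mul_assoc]
  obtain ⟨P₁, hP1psd, hP11, htr1⟩ := exists_proj_trPlus hM1H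
  obtain ⟨P₂, hP2psd, hP21, htr2⟩ := exists_proj_trPlus hM2H
  -- the matrices Yᵢ = Sᵢ Pᵢ Sᵢ
  set Y₁ := S₁ * P₁ * S₁ with hY1
  set Y₂ := S₂ * P₂ * S₂ with hY2
  have hY1psd : Y₁.PosSemidef := by
    have h := hP1psd.mul_mul_conjTranspose_same S₁
    rwa [hS1H.eq] at h
  have hY2psd : Y₂.PosSemidef := by
    have h := hP2psd.mul_mul_conjTranspose_same S₂
    rwa [hS2H.eq] at h
  have hXY1 : (X₁ - Y₁).PosSemidef := by
    have hd : X₁ - Y₁ = S₁ * (1 - P₁) * S₁ := by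
      rw [Matrix.mul_sub, Matrix.sub_mul, Matrix.mul_one, h1.sqrt_mul_self, hY1]
    rw [hd]
    have h := hP11.mul_mul_conjTranspose_same S₁
    rwa [hS1H.eq] at h
  have hXY2 : (X₂ - Y₂).PosSemidef := by
    have hd : X₂ - Y₂ = S₂ * (1 - P₂) * S₂ := by
      rw [Matrix.mul_sub, Matrix.sub_mul, Matrix.mul_one, h2.sqrt_mul_self, hY2]
    rw [hd]
    have h := hP21.mul_mul_conjTranspose_same S₂
    rwa [hS2H.eq] at h
  have htrY1 : (B * Y₁).trace = trPlus (S₁ * B * S₁) := by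
    rw [hY1, show B * (S₁ * P₁ * S₁) = (B * S₁ * P₁) * S₁ from by simp only [Matrix.mul_assoc],
      Matrix.trace_mul_comm (B * S₁ * P₁) S₁, ← htr1]
    simp only [Matrix.mul_assoc]
  have htrY2 : (B * Y₂).trace = trPlus (S₂ * B * S₂) := by
    rw [hY2, show B * (S₂ * P₂ * S₂) = (B * S₂ * P₂) * S₂ from by simp only [Matrix.mul_assoc],
      Matrix.trace_mul_comm (B * S₂ * P₂) S₂, ← htr2]
    simp only [Matrix.mul_assoc]
  set Y := θ • Y₁ + (1 - θ) • Y₂ with hYdef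
  have hYpsd : Y.PosSemidef := (psd_smul hY1psd hθ0).add (psd_smul hY2psd hθ')
  have hXYθ : ((θ • X₁ + (1 - θ) • X₂) - Y).PosSemidef := by
    have hd : (θ • X₁ + (1 - θ) • X₂) - Y = θ • (X₁ - Y₁) + (1 - θ) • (X₂ - Y₂) := by
      rw [hYdef, smul_sub, smul_sub]
      abel
    rw [hd]
    exact (psd_smul hXY1 hθ0).add (psd_smul hXY2 hθ')
  have hlin : (B * Y).trace = θ * (B * Y₁).trace + (1 - θ) * (B * Y₂).trace := by
    rw [hYdef, Matrix.mul_add, Matrix.mul_smul, Matrix.mul_smul, Matrix.trace_add,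
      Matrix.trace_smul, Matrix.trace_smul]
    simp [smul_eq_mul]
  have hkey := trace_le_trPlus_sqrt hB hXθ hYpsd hXYθ
  rw [hm1, hm2, hmθ, ← htrY1, ← htrY2, ← hlin]
  exact hkey
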